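/- Let A = (Q, {a₁, a₂, a₃}, δ) be a synchronizing DFA with 3 input letters, and let B = (Q × {a₁,a₂,a₃}, {a, b}, δ') where δ'((q, a_i), a) = (q, a_{min(i+1,3)}) and δ'((q, a_i), b) = (δ(q, a_i), a₁). Then B is synchronizing and min_synch(A) ≤ min_synch(B). -/
import Mathlib


/-- The two-letter alphabet {a, b}. -/
inductive Letter2 where
  | a | b
deriving DecidableEq

/-- Extension of a transition function to words (left-to-right action). -/
def runW {Q A : Type*} (δ : Q → A → Q) : Q → List A → Q
  | q, [] => q
  | q, x :: w => runW δ (δ q x) w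

/-- The 2-letter automaton B built from a 3-letter automaton A = (Q, {a₁,a₂,a₃}, δ):
letter a advances the stored letter index (capped at 3 = index 2), letter b applies
the stored letter to the first component and resets the stored letter to a₁. -/
def deltaB {Q : Type*} (δ : Q → Fin 3 → Q) : Q × Fin 3 → Letter2 → Q × Fin 3
  | (q, i), Letter2.a => (q, ⟨min ((i : ℕ) + 1) 2, by omega⟩)
  | (q, i), Letter2.b => (δ q i, ⟨0, by omega⟩)

def encode : List (Fin 3) → List Letter2
  | [] => []
  | i :: w => List.replicate (i : ℕ) Letter2.a ++ Letter2.b :: encode w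

def decode : Fin 3 → List Letter2 → List (Fin 3)
  | _, [] => []
  | i, Letter2.a :: v => decode ⟨min ((i : ℕ) + 1) 2, by omega⟩ v
  | i, Letter2.b :: v => i :: decode ⟨0, by omega⟩ v

lemma runW_append {Q A : Type*} (δ : Q → A → Q) (u v : List A) (q : Q) :
    runW δ q (u ++ v) = runW δ (runW δ q u) v := by
  induction u generalizing q with
  | nil => rfl
  | cons x u ih => simp [runW, ih]

lemma run_replicate {Q : Type*} (δ : Q → Fin 3 → Q) (q : Q) (i : Fin 3) :
    runW (deltaB δ) (q, (⟨0, by omega⟩ : Fin 3)) (List.replicate (i : ℕ) Letter2.a)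
      = (q, i) := by
  fin_cases i <;> simp [runW, deltaB, List.replicate]

lemma run_encode {Q : Type*} (δ : Q → Fin 3 → Q) (w : List (Fin 3)) (q : Q) :
    runW (deltaB δ) (q, (⟨0, by omega⟩ : Fin 3)) (encode w)
      = (runW δ q w, (⟨0, by omega⟩ : Fin 3)) := by
  induction w generalizing q with
  | nil => rfl
  | cons i w ih =>
    simp only [encode, runW_append, run_replicate, runW, deltaB]
    exact ih _

lemma run_decode {Q : Type*} (δ : Q → Fin 3 → Q) (v : List Letter2) (i : Fin 3) (q : Q) :
    (runW (deltaB δ) (q, i) v).1 = runW δ q (decode i v) := by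
  induction v generalizing i q with
  | nil => rfl
  | cons x v ih =>
    cases x <;> simp [runW, deltaB, decode, ih]

lemma decode_length (v : List Letter2) (i : Fin 3) :
    (decode i v).length ≤ v.length := by
  induction v generalizing i with
  | nil => simp [decode]
  | cons x v ih =>
    cases x <;> simp [decode] <;> exact le_trans (ih _) (by omega)

/-- If the 3-letter automaton A is synchronizing, then the 2-letter automaton B is
synchronizing, and min_synch(A) ≤ min_synch(B) (every synchronizing word of B is at
least as long as some synchronizing word of A). -/
theorem two_letter_reduction_lower
    {Q : Type*} (δ : Q → Fin 3 → Q)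
    (hA : ∃ w : List (Fin 3), ∃ p : Q, ∀ q : Q, runW δ q w = p) :
    (∃ v : List Letter2, ∃ p' : Q × Fin 3, ∀ s : Q × Fin 3, runW (deltaB δ) s v = p') ∧
      ∀ v : List Letter2,
        (∃ p' : Q × Fin 3, ∀ s : Q × Fin 3, runW (deltaB δ) s v = p') →
        ∃ w : List (Fin 3), (∃ p : Q, ∀ q : Q, runW δ q w = p) ∧ w.length ≤ v.length := by
  obtain ⟨w, p, hp⟩ := hA
  constructor
  · refine ⟨Letter2.b :: encode w, (p, ⟨0, by omega⟩), fun s => ?_⟩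
    obtain ⟨q, i⟩ := s
    show runW (deltaB δ) (deltaB δ (q, i) Letter2.b) (encode w) = _
    simp only [deltaB, run_encode, hp]
  · rintro v ⟨p', hp'⟩
    refine ⟨decode ⟨0, by omega⟩ v, ⟨p'.1, fun q => ?_⟩, decode_length v _⟩
    rw [← run_decode, hp' (q, ⟨0, by omega⟩)]
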